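/- Let i, j ∈ {1,…,n} with |i − j| > 1, and set M := O(V_i ∩ V_j) ⊗_{O(V_j)^{s_j}} O(V_j), a right O(V_j)-module via the second factor. Then every f ∈ O(V_j) whose restriction to V_i ∩ V_j is zero acts as zero on M; consequently the right O(V_j)-action on M factors through the restriction O(V_j) → O(V_i ∩ V_j), and M is free as a right O(V_i ∩ V_j)-module. -/

import Mathlib

/-! Basic setup: type A_n geometric representation, Weyl lines, combinatorics. -/

set_option linter.unusedSectionVars false
set_option synthInstance.maxHeartbeats 1000000
set_option maxHeartbeats 1000000

namespace TLpaper

/-- A permutation is a transposition. -/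
def IsTransposition {α : Type} [DecidableEq α] (σ : Equiv.Perm α) : Prop :=
  ∃ a b, a ≠ b ∧ σ = Equiv.swap a b

variable (k : Type) [Field k] [CharZero k] (n : ℕ)

/-- The reflecting hyperplane of a permutation `t` inside `V = {x | ∑ x i = 0}`:
the set of points of `V` fixed by permuting the coordinates by `t`.  For a
transposition `t = (a b)` this is `{x ∈ V | x a = x b}`. -/
def Hyp (t : Equiv.Perm (Fin (n + 1))) : Set (Fin (n + 1) → k) :=
  {x | (∑ i, x i) = 0 ∧ ∀ i, x (t i) = x i}

/-- A Weyl line: a one-dimensional linear subspace of `V` which is an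
intersection of a (possibly empty) family of reflecting hyperplanes. -/
def IsWeylLine (L : Set (Fin (n + 1) → k)) : Prop :=
  (∃ v : Fin (n + 1) → k, v ≠ 0 ∧ L = Set.range fun c : k => c • v) ∧
  ∃ T : Set (Equiv.Perm (Fin (n + 1))),
    (∀ t ∈ T, IsTransposition t) ∧
    L = {x | (∑ i, x i) = 0} ∩ ⋂ t ∈ T, Hyp k n t

/-- `Z`: the union of all Weyl lines. -/
def ZZ : Set (Fin (n + 1) → k) := ⋃ L ∈ {L | IsWeylLine k n L}, L

/-- `V_t`: the union of all Weyl lines transverse to `t` (i.e. not contained in `H_t`). -/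
def Vt (t : Equiv.Perm (Fin (n + 1))) : Set (Fin (n + 1) → k) :=
  ⋃ L ∈ {L | IsWeylLine k n L ∧ ¬L ⊆ Hyp k n t}, L

open Fin.NatCast in
/-- The simple transposition `s_i = (i, i+1)` (0-indexed: it swaps coordinates
`i` and `i+1` of `Fin (n+1)`, for `i < n`). -/
def simple (i : ℕ) : Equiv.Perm (Fin (n + 1)) :=
  Equiv.swap (i : Fin (n + 1)) ((i + 1 : ℕ) : Fin (n + 1))

/-- `V_i := V_{s_i}`. -/
def Vi (i : ℕ) : Set (Fin (n + 1) → k) := Vt k n (simple n i)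

/-- The action of a permutation on a subset of `k^{n+1}` (permuting coordinates). -/
def permSet (σ : Equiv.Perm (Fin (n + 1))) (W : Set (Fin (n + 1) → k)) :
    Set (Fin (n + 1) → k) :=
  (fun x => x ∘ σ) '' W

/-- `i · W := V_i ∩ (W ∪ s_i (W))`. -/
def dotAct (i : ℕ) (W : Set (Fin (n + 1) → k)) : Set (Fin (n + 1) → k) :=
  Vi k n i ∩ (W ∪ permSet k n (simple n i) W)

/-- The set `W_{i_1 ⋯ i_m}` associated with a sequence of indices. -/
def seqSet : List ℕ → Set (Fin (n + 1) → k)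
  | [] => ZZ k n
  | [i] => Vi k n i
  | i :: j :: l => dotAct k n i (seqSet (j :: l))

/-- Membership in the family `𝒱_n`. -/
def memVn (W : Set (Fin (n + 1) → k)) : Prop :=
  ∃ l : List ℕ, l ≠ [] ∧ (∀ i ∈ l, i < n) ∧ W = seqSet k n l

/-- A set of pairwise commuting transpositions. -/
def CommTranspositions (Q : Set (Equiv.Perm (Fin (n + 1)))) : Prop :=
  (∀ t ∈ Q, IsTransposition t) ∧ ∀ t ∈ Q, ∀ t' ∈ Q, t * t' = t' * t


/-! Coordinate rings of subvarieties of `k^{n+1}`. -/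

noncomputable section

/-- The ring `O(X)` of regular functions on `X`: the quotient of the polynomial ring
`k[X_0, …, X_n]` by the vanishing ideal of `X`. -/
def O (X : Set (Fin (n + 1) → k)) : Type :=
  MvPolynomial (Fin (n + 1)) k ⧸ MvPolynomial.vanishingIdeal k X

instance (X : Set (Fin (n + 1) → k)) : CommRing (O k n X) :=
  inferInstanceAs (CommRing (MvPolynomial (Fin (n + 1)) k ⧸ MvPolynomial.vanishingIdeal k X))

theorem vanishingIdeal_anti {X Y : Set (Fin (n + 1) → k)} (h : X ⊆ Y) :
    MvPolynomial.vanishingIdeal k Y ≤ MvPolynomial.vanishingIdeal k X := fun p hp => by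
  rw [MvPolynomial.mem_vanishingIdeal_iff] at hp ⊢
  exact fun x hx => hp x (h hx)

/-- The (surjective) restriction homomorphism `O(Y) → O(X)` for `X ⊆ Y`. -/
def res {X Y : Set (Fin (n + 1) → k)} (h : X ⊆ Y) : O k n Y →+* O k n X :=
  Ideal.Quotient.factor (vanishingIdeal_anti k n h)

open Classical in
/-- The ring endomorphism of `O(X)` induced by a permutation `σ` of the coordinates
(when `X` is `σ`-stable; the definition branches on this (true, in our uses)
stability condition to be total). -/
def permO (σ : Equiv.Perm (Fin (n + 1))) (X : Set (Fin (n + 1) → k)) :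
    O k n X →+* O k n X :=
  if h : ∀ x ∈ X, x ∘ σ ∈ X then
    Ideal.Quotient.lift _
      ((Ideal.Quotient.mk _).comp (MvPolynomial.rename (R := k) ⇑σ).toRingHom)
      (fun p hp => by
        have hmem : (MvPolynomial.rename (R := k) ⇑σ) p ∈
            MvPolynomial.vanishingIdeal k X := by
          rw [MvPolynomial.mem_vanishingIdeal_iff]
          intro x hx
          rw [MvPolynomial.aeval_rename]
          exact (MvPolynomial.mem_vanishingIdeal_iff.1 hp) _ (h x hx)
        exact Ideal.Quotient.eq_zero_iff_mem.2 hmem)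
  else RingHom.id _

/-- The fixed subalgebra `O(V_i)^{s_i}` of `O(V_i)` under the automorphism induced
by the simple transposition `s_i`. -/
def fixedO (i : ℕ) : Subring (O k n (Vi k n i)) :=
  RingHom.eqLocus (permO k n (simple n i) (Vi k n i)) (RingHom.id _)

open Fin.NatCast in
/-- The image `f_i` of `X_i − X_{i+1}` in the coordinate ring `O(X)`. -/
def fbar (X : Set (Fin (n + 1) → k)) (i : ℕ) : O k n X :=
  Ideal.Quotient.mk _
    (MvPolynomial.X (i : Fin (n + 1)) - MvPolynomial.X ((i + 1 : ℕ) : Fin (n + 1)))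

theorem Vt_subset_ZZ (t : Equiv.Perm (Fin (n + 1))) : Vt k n t ⊆ ZZ k n := by
  refine Set.iUnion₂_subset fun L hL => ?_
  exact Set.subset_iUnion₂ (s := fun L _ => L) L hL.1

theorem Vi_subset_ZZ (i : ℕ) : Vi k n i ⊆ ZZ k n := Vt_subset_ZZ k n _

theorem seqSet_subset_ZZ : ∀ l : List ℕ, seqSet k n l ⊆ ZZ k n
  | [] => subset_rfl
  | [_] => Vi_subset_ZZ k n _
  | _ :: _ :: _ => Set.inter_subset_left.trans (Vi_subset_ZZ k n _)

end

open scoped TensorProduct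

/-- `S` is a free module over `R`, the action being through the ring homomorphism
`f : R →+* S` (i.e. `r • x := f r * x`): there is a basis. -/
def FreeVia {R S : Type} [CommRing R] [CommRing S] (f : R →+* S) : Prop :=
  ∃ (ι : Type) (b : ι → S), ∀ x : S, ∃! c : ι →₀ R, x = c.sum fun j r => f r * b j

/-!
Write `s = s_j`, `d = X_j - X_{j+1}` and `W = V_i ∩ V_j`. As `s` commutes with `s_i`, both `V_j`
and `W` are `s`-stable, and as `2` is invertible every `f ∈ O(V_j)` is `a + b d` with `a, b`
invariant. On `W` the function `d` vanishes only at the origin, and `W` contains a whole line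
(spanned by the vector constant on `{i, j}` and on its complement), so `d` is a non-zero-divisor
of `O(W)`. Applying `s` to a relation `a + b d = 0` on `W` gives `a = b = 0` on `W` (divide by
`2`, then by `d`). Hence `1 ⊗ f = a ⊗ 1 + b ⊗ d = 0` when `f|_W = 0`. The same splitting shows
that `M` is spanned over `O(W)` by `1 ⊗ 1` and `d ⊗ 1`, and the two evaluations
`x ⊗ f ↦ x f|_W` and `x ⊗ f ↦ s(x) f|_W` send `c₀ (1 ⊗ 1) + c₁ (d ⊗ 1)` to `c₀ ± d c₁`, so these
generators are independent.
-/

theorem freeVia_of_existsUnique_sum {R S ι : Type} [CommRing R] [CommRing S] [Fintype ι]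
    (f : R →+* S) (b : ι → S) (h : ∀ x, ∃! c : ι → R, x = ∑ i, f (c i) * b i) : FreeVia f := by
  refine ⟨ι, b, fun x => ?_⟩
  have hsum (c : ι →₀ R) : (c.sum fun i r => f r * b i) = ∑ i, f (c i) * b i :=
    Finsupp.sum_fintype _ _ fun i => by rw [map_zero, zero_mul]
  obtain ⟨c, hc, huniq⟩ := h x
  refine ⟨Finsupp.equivFunOnFinite.symm c, ?_, fun c' hc' => ?_⟩
  · dsimp only
    rwa [hsum, Finsupp.coe_equivFunOnFinite_symm]
  · rw [Equiv.eq_symm_apply]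
    exact huniq c' ((hc' : x = _).trans (hsum c'))

theorem eq_zero_of_add_mul_eq_zero_of_sub_mul_eq_zero {N : Type*} [CommRing N] {δ y₀ y₁ : N}
    (h2 : IsUnit (2 : N)) (hδ : δ ∈ nonZeroDivisors N) (hadd : y₀ + δ * y₁ = 0)
    (hsub : y₀ - δ * y₁ = 0) : y₀ = 0 ∧ y₁ = 0 := by
  have h₀ : 2 * y₀ = 0 := by linear_combination hadd + hsub
  have h₁ : (2 * y₁) * δ = 0 := by linear_combination hadd - hsub
  exact ⟨h2.mul_right_eq_zero.mp h₀,
    h2.mul_right_eq_zero.mp (mem_nonZeroDivisors_iff_right.mp hδ _ h₁)⟩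

section SymmetricTensor

variable {A R N : Type} [CommRing A] [CommRing R] [CommRing N] [Algebra A R] [Algebra A N]

theorem algebraMap_mul_tmul (a : A) (x : N) (r : R) :
    (algebraMap A N a * x) ⊗ₜ[A] r = x ⊗ₜ[A] (algebraMap A R a * r) := by
  rw [← Algebra.smul_def, ← Algebra.smul_def, TensorProduct.smul_tmul]

variable (ρ : R →ₐ[A] N) (τ : N →ₐ[A] N) {d : R}

theorem map_algebraMap_add_mul_eq_zero {a b : A} (hτ : τ (ρ d) = -ρ d) (h2 : IsUnit (2 : N))
    (hd : ρ d ∈ nonZeroDivisors N) (h : ρ (algebraMap A R a + algebraMap A R b * d) = 0) :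
    algebraMap A N a = 0 ∧ algebraMap A N b = 0 := by
  rw [map_add, map_mul, AlgHom.commutes, AlgHom.commutes, mul_comm] at h
  have hneg := congrArg τ h
  rw [map_add, map_mul, AlgHom.commutes, AlgHom.commutes, hτ, map_zero] at hneg
  exact eq_zero_of_add_mul_eq_zero_of_sub_mul_eq_zero h2 hd h (by linear_combination hneg)

theorem one_tmul_eq_zero_of_map_eq_zero (hτ : τ (ρ d) = -ρ d) (h2 : IsUnit (2 : N))
    (hd : ρ d ∈ nonZeroDivisors N)
    (hspan : ∀ r : R, ∃ a b : A, r = algebraMap A R a + algebraMap A R b * d)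
    {r : R} (hr : ρ r = 0) : (1 : N) ⊗ₜ[A] r = 0 := by
  obtain ⟨a, b, rfl⟩ := hspan r
  obtain ⟨ha, hb⟩ := map_algebraMap_add_mul_eq_zero ρ τ hτ h2 hd hr
  rw [TensorProduct.tmul_add, ← mul_one (algebraMap A R a), ← algebraMap_mul_tmul,
    ← algebraMap_mul_tmul, ha, hb]
  simp only [zero_mul, TensorProduct.zero_tmul, add_zero]

theorem exists_eq_one_tmul_add_tmul (hρ : Function.Surjective ρ)
    (hspan : ∀ r : R, ∃ a b : A, r = algebraMap A R a + algebraMap A R b * d)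
    (m : N ⊗[A] R) : ∃ r₀ r₁ : R, m = (1 : N) ⊗ₜ[A] r₀ + ρ d ⊗ₜ[A] r₁ := by
  induction m using TensorProduct.induction_on with
  | zero => exact ⟨0, 0, by simp⟩
  | tmul x r =>
    obtain ⟨s, rfl⟩ := hρ x
    obtain ⟨a, b, rfl⟩ := hspan s
    refine ⟨algebraMap A R a * r, algebraMap A R b * r, ?_⟩
    rw [map_add, map_mul, AlgHom.commutes, AlgHom.commutes, TensorProduct.add_tmul,
      ← algebraMap_mul_tmul, ← algebraMap_mul_tmul, mul_one]
  | add m m' hm hm' =>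
    obtain ⟨r₀, r₁, rfl⟩ := hm
    obtain ⟨r₀', r₁', rfl⟩ := hm'
    exact ⟨r₀ + r₀', r₁ + r₁', by simp only [TensorProduct.tmul_add]; abel⟩

theorem exists_lift_includeRight_freeVia (hρ : Function.Surjective ρ) (hτ : τ (ρ d) = -ρ d)
    (h2 : IsUnit (2 : N)) (hd : ρ d ∈ nonZeroDivisors N)
    (hspan : ∀ r : R, ∃ a b : A, r = algebraMap A R a + algebraMap A R b * d) :
    ∃ g : N →+* N ⊗[A] R, g.comp (ρ : R →+* N) = Algebra.TensorProduct.includeRight.toRingHom ∧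
      FreeVia g := by
  let g := (ρ : R →+* N).liftOfSurjective hρ
    ⟨(Algebra.TensorProduct.includeRight : R →ₐ[A] N ⊗[A] R).toRingHom, fun r hr =>
      RingHom.mem_ker.mpr
        (one_tmul_eq_zero_of_map_eq_zero ρ τ hτ h2 hd hspan (RingHom.mem_ker.mp hr))⟩
  have hg : g.comp (ρ : R →+* N) = Algebra.TensorProduct.includeRight.toRingHom :=
    RingHom.liftOfSurjective_comp _ hρ _
  have hgρ (r : R) : g (ρ r) = (1 : N) ⊗ₜ[A] r := RingHom.congr_fun hg r
  have hcoord (σ : N →ₐ[A] N) (y₀ y₁ : N) :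
      Algebra.TensorProduct.productMap σ ρ (g y₀ * (1 ⊗ₜ 1) + g y₁ * (ρ d ⊗ₜ 1)) =
        y₀ + σ (ρ d) * y₁ := by
    obtain ⟨r₀, rfl⟩ := hρ y₀
    obtain ⟨r₁, rfl⟩ := hρ y₁
    simp only [hgρ, Algebra.TensorProduct.tmul_mul_tmul, map_add,
      Algebra.TensorProduct.productMap_apply_tmul, map_one, one_mul, mul_one]
  refine ⟨g, hg, freeVia_of_existsUnique_sum g ![1 ⊗ₜ 1, ρ d ⊗ₜ 1] fun m => ?_⟩
  simp only [Fin.sum_univ_two, Matrix.cons_val_zero, Matrix.cons_val_one, Matrix.cons_val_fin_one]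
  obtain ⟨r₀, r₁, rfl⟩ := exists_eq_one_tmul_add_tmul ρ hρ hspan m
  have hm : (1 : N) ⊗ₜ[A] r₀ + ρ d ⊗ₜ[A] r₁ = g (ρ r₀) * (1 ⊗ₜ 1) + g (ρ r₁) * (ρ d ⊗ₜ 1) := by
    simp only [hgρ, Algebra.TensorProduct.tmul_mul_tmul, one_mul, mul_one]
  refine ⟨![ρ r₀, ρ r₁], hm, fun c hc => ?_⟩
  have hcomp (σ : N →ₐ[A] N) : c 0 + σ (ρ d) * c 1 = ρ r₀ + σ (ρ d) * ρ r₁ := by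
    rw [← hcoord, ← hcoord, ← hm, (hc : _ = _)]
  have hid := hcomp (AlgHom.id A N)
  have hneg := hcomp τ
  rw [AlgHom.id_apply] at hid
  rw [hτ] at hneg
  obtain ⟨h₀, h₁⟩ := eq_zero_of_add_mul_eq_zero_of_sub_mul_eq_zero (y₀ := c 0 - ρ r₀)
    (y₁ := c 1 - ρ r₁) h2 hd (by linear_combination hid) (by linear_combination hneg)
  ext i
  fin_cases i
  · exact sub_eq_zero.mp h₀
  · exact sub_eq_zero.mp h₁

end SymmetricTensor

section SwapDecomposition

open MvPolynomial

theorem X_sub_X_dvd_sub_aeval_update {ι R : Type*} [DecidableEq ι] [CommRing R] (a b : ι)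
    (p : MvPolynomial ι R) : X a - X b ∣ p - aeval (Function.update X b (X a)) p := by
  rw [← Ideal.mem_span_singleton, ← Ideal.Quotient.eq, ← Ideal.Quotient.mkₐ_eq_mk R,
    ← AlgHom.comp_apply]
  congr 1
  refine (algHom_ext fun c => ?_).symm
  rcases eq_or_ne c b with rfl | hcb
  · simp only [AlgHom.comp_apply, aeval_X, Function.update_self, Ideal.Quotient.mkₐ_eq_mk]
    exact Ideal.Quotient.eq.mpr (Ideal.mem_span_singleton.mpr dvd_rfl)
  · simp [Function.update_of_ne hcb]

variable {ι K : Type*} [DecidableEq ι] [Field K] [CharZero K] {a b : ι}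

theorem exists_eq_X_sub_X_mul_of_rename_swap_eq_neg (hab : a ≠ b) {p : MvPolynomial ι K}
    (hp : rename (Equiv.swap a b) p = -p) :
    ∃ Q, rename (Equiv.swap a b) Q = Q ∧ p = (X a - X b) * Q := by
  set φ : MvPolynomial ι K →ₐ[K] MvPolynomial ι K := aeval (Function.update X b (X a))
  -- Identifying `X b` with `X a` kills every antisymmetric polynomial.
  have hφ : φ p = 0 := by
    have hφswap : φ.comp (rename (Equiv.swap a b)) = φ := algHom_ext fun c => by
      rcases eq_or_ne c a with rfl | hca
      · simp [φ, Function.update_of_ne hab]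
      rcases eq_or_ne c b with rfl | hcb
      · simp [φ, Function.update_of_ne hab]
      · simp [φ, Equiv.swap_apply_of_ne_of_ne hca hcb]
    have := congrArg (φ ·) hp
    simp only [← AlgHom.comp_apply, hφswap, map_neg] at this
    exact self_eq_neg.mp this
  obtain ⟨Q, hQ⟩ := X_sub_X_dvd_sub_aeval_update a b p
  rw [hφ, sub_zero] at hQ
  have hX : (X b - X a : MvPolynomial ι K) ≠ 0 :=
    sub_ne_zero.mpr ((X_injective (σ := ι) (R := K)).ne hab.symm)
  refine ⟨Q, mul_left_cancel₀ hX ?_, hQ⟩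
  have := congrArg (rename (Equiv.swap a b)) hQ
  rw [hp, map_mul, map_sub, rename_X, rename_X, Equiv.swap_apply_left, Equiv.swap_apply_right,
    hQ] at this
  linear_combination -this

theorem exists_rename_swap_eq_add_X_sub_X_mul (hab : a ≠ b) (p : MvPolynomial ι K) :
    ∃ P Q, rename (Equiv.swap a b) P = P ∧ rename (Equiv.swap a b) Q = Q ∧
      p = P + (X a - X b) * Q := by
  have hinv (q : MvPolynomial ι K) : rename (Equiv.swap a b) (rename (Equiv.swap a b) q) = q := by
    rw [rename_rename, ← Equiv.Perm.coe_mul, Equiv.swap_mul_self, Equiv.Perm.coe_one,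
      rename_id_apply]
  obtain ⟨Q, hQ, hpQ⟩ := exists_eq_X_sub_X_mul_of_rename_swap_eq_neg hab
    (p := C 2⁻¹ * (p - rename (Equiv.swap a b) p)) (by rw [map_mul, map_sub, hinv, rename_C]; ring)
  refine ⟨C 2⁻¹ * (p + rename (Equiv.swap a b) p), Q, ?_, hQ, ?_⟩
  · rw [map_mul, map_add, hinv, rename_C, add_comm]
  · rw [← hpQ, ← mul_add, add_add_sub_cancel, ← two_mul, ← mul_assoc, ← map_ofNat C 2, ← C_mul,
      inv_mul_cancel₀ two_ne_zero, C_1, one_mul]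

end SwapDecomposition

open MvPolynomial in
theorem eval_zero_of_forall_eval_smul_eq_zero {ι K : Type*} [Field K] [Infinite K]
    (v : ι → K) (q : MvPolynomial ι K) (h : ∀ c : K, c ≠ 0 → eval (c • v) q = 0) :
    eval 0 q = 0 := by
  set P : Polynomial K := aeval (fun m => Polynomial.C (v m) * Polynomial.X) q
  have hP (c : K) : P.eval c = eval (c • v) q := by
    rw [← Polynomial.coe_aeval_eq_eval, comp_aeval_apply, ← coe_aeval_eq_eval]
    refine congrArg (aeval · q) (funext fun m => ?_)
    simp only [map_mul, Polynomial.aeval_C, Polynomial.aeval_X, Pi.smul_apply, smul_eq_mul,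
      Algebra.algebraMap_self, RingHom.id_apply, mul_comm]
  have hP0 : P = 0 := Polynomial.eq_zero_of_infinite_isRoot P
    ((Set.finite_singleton 0).infinite_compl.mono fun c hc => (hP c).trans (h c hc))
  simpa [hP0] using (hP 0).symm

theorem sum_ite_mem_univ {ι R : Type*} [Fintype ι] [DecidableEq ι] [Semiring R] (B : Finset ι)
    (α β : R) : ∑ m, (if m ∈ B then α else β) = B.card * α + Bᶜ.card * β := by
  rw [Finset.sum_ite]
  simp [Finset.filter_not, Finset.compl_eq_univ_sdiff]

section WeylLines

variable {k n}

theorem mem_Hyp_swap_iff {a b : Fin (n + 1)} {x : Fin (n + 1) → k} :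
    x ∈ Hyp k n (Equiv.swap a b) ↔ (∑ i, x i) = 0 ∧ x a = x b := by
  refine and_congr_right fun _ => ⟨fun h => by simpa using (h a).symm, fun h i => ?_⟩
  rw [Equiv.swap_apply_def]
  split_ifs with hia hib
  · rw [hia, h]
  · rw [hib, h]
  · rfl

theorem comp_mem_Hyp_iff (σ t : Equiv.Perm (Fin (n + 1))) {x : Fin (n + 1) → k} :
    x ∘ σ ∈ Hyp k n t ↔ x ∈ Hyp k n (σ * t * σ⁻¹) := by
  simp only [Hyp, Set.mem_ofPred_eq, Function.comp_apply, Equiv.sum_comp, Equiv.Perm.coe_mul]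
  refine and_congr_right fun _ => σ.forall_congr_left.trans (forall_congr' fun i => ?_)
  simp [Equiv.Perm.inv_def]

theorem isWeylLine_preimage_comp (σ : Equiv.Perm (Fin (n + 1))) {L : Set (Fin (n + 1) → k)}
    (hL : IsWeylLine k n L) : IsWeylLine k n ((· ∘ σ) ⁻¹' L) := by
  obtain ⟨⟨v, hv0, rfl⟩, T, hT, hTL⟩ := hL
  refine ⟨⟨v ∘ ⇑σ⁻¹, fun h => hv0 ?_, ?_⟩, (fun t => σ * t * σ⁻¹) '' T, ?_, ?_⟩
  · simpa [Function.comp_assoc] using congrArg (· ∘ σ) h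
  · ext y
    exact exists_congr fun c => (Equiv.comp_symm_eq σ y (c • v)).symm
  · rintro _ ⟨t, ht, rfl⟩
    obtain ⟨a, b, hab, rfl⟩ := hT t ht
    exact ⟨σ a, σ b, σ.injective.ne hab, (Equiv.swap_apply_apply σ a b).symm⟩
  · rw [hTL, Set.preimage_inter, Set.preimage_iInter₂, Set.biInter_image]
    ext y
    simp only [Set.mem_inter_iff, Set.mem_preimage, Set.mem_ofPred_eq, Set.mem_iInter,
      comp_mem_Hyp_iff, Function.comp_apply, Equiv.sum_comp]

theorem comp_mem_Vt {σ t : Equiv.Perm (Fin (n + 1))} (hσ : Commute σ t) {x : Fin (n + 1) → k}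
    (hx : x ∈ Vt k n t) : x ∘ σ ∈ Vt k n t := by
  simp only [Vt, Set.mem_iUnion, Set.mem_ofPred_eq, exists_prop] at hx ⊢
  obtain ⟨L, ⟨hL, hLt⟩, hxL⟩ := hx
  refine ⟨(· ∘ ⇑σ⁻¹) ⁻¹' L, ⟨isWeylLine_preimage_comp σ⁻¹ hL, fun hsub => hLt fun z hz => ?_⟩, ?_⟩
  · have hzσ : z ∘ σ ∈ (· ∘ ⇑σ⁻¹) ⁻¹' L := by simpa [Function.comp_assoc] using hz
    simpa [comp_mem_Hyp_iff, hσ.eq] using hsub hzσ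
  · simpa [Function.comp_assoc] using hxL

theorem smul_mem_Vt {t : Equiv.Perm (Fin (n + 1))} {x : Fin (n + 1) → k} (hx : x ∈ Vt k n t)
    (c : k) : c • x ∈ Vt k n t := by
  simp only [Vt, Set.mem_iUnion, Set.mem_ofPred_eq, exists_prop] at hx ⊢
  obtain ⟨L, hL, hxL⟩ := hx
  obtain ⟨⟨v, -, rfl⟩, -⟩ := hL.1
  obtain ⟨c', rfl⟩ := hxL
  exact ⟨_, hL, c * c', mul_smul c c' v⟩

theorem apply_ne_of_mem_Vt_swap {a b : Fin (n + 1)} {x : Fin (n + 1) → k}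
    (hx : x ∈ Vt k n (Equiv.swap a b)) (hx0 : x ≠ 0) : x a ≠ x b := by
  simp only [Vt, Set.mem_iUnion, Set.mem_ofPred_eq, exists_prop] at hx
  obtain ⟨_, ⟨⟨⟨v, -, rfl⟩, T, -, hTL⟩, hLt⟩, c, rfl⟩ := hx
  obtain ⟨z, ⟨c', rfl⟩, hz⟩ := Set.not_subset.mp hLt
  have hmem : c' • v ∈ {x | ∑ i, x i = 0} ∩ ⋂ t ∈ T, Hyp k n t := hTL ▸ Set.mem_range_self c'
  have hc : c ≠ 0 := by rintro rfl; simp at hx0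
  have hv : v a ≠ v b := fun h => hz (mem_Hyp_swap_iff.mpr ⟨hmem.1, by simp [h]⟩)
  simpa [hc] using hv

end WeylLines

section BlockLine

variable {k n}

def blockVec (B : Finset (Fin (n + 1))) : Fin (n + 1) → k :=
  fun m => if m ∈ B then (Bᶜ.card : k) else -(B.card : k)

variable {B : Finset (Fin (n + 1))} {a b : Fin (n + 1)}

theorem blockVec_apply_ne (ha : a ∈ B) (hb : b ∉ B) : blockVec (k := k) B a ≠ blockVec B b := by
  have hcard : ((Bᶜ.card + B.card : ℕ) : k) ≠ 0 := by
    rw [Finset.card_compl_add_card]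
    exact Nat.cast_ne_zero.mpr (by simp)
  simp only [blockVec, if_pos ha, if_neg hb]
  intro h
  exact hcard (by push_cast; linear_combination h)

theorem isWeylLine_blockVec (ha : a ∈ B) (hb : b ∉ B) :
    IsWeylLine k n (Set.range fun c : k => c • blockVec B) := by
  have hBc : (Bᶜ.card : k) ≠ 0 :=
    Nat.cast_ne_zero.mpr (Finset.card_ne_zero.mpr ⟨b, Finset.mem_compl.mpr hb⟩)
  refine ⟨⟨blockVec B, fun h => ?_, rfl⟩,
    {t | ∃ a' b', a' ≠ b' ∧ (a' ∈ B ↔ b' ∈ B) ∧ t = Equiv.swap a' b'},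
    fun t ⟨a', b', hab, _, ht⟩ => ⟨a', b', hab, ht⟩, ?_⟩
  · simpa [blockVec, ha, hBc] using congrFun h a
  ext x
  simp only [Set.mem_range, Set.mem_inter_iff, Set.mem_ofPred_eq, Set.mem_iInter]
  constructor
  · rintro ⟨c, rfl⟩
    have hsum : ∑ m, (c • blockVec (k := k) B) m = 0 := by
      simp only [Pi.smul_apply, smul_eq_mul, ← Finset.mul_sum, blockVec, sum_ite_mem_univ]
      ring
    refine ⟨hsum, fun t ⟨a', b', _, hab', ht⟩ => ?_⟩
    rw [ht, mem_Hyp_swap_iff]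
    exact ⟨hsum, by simp [blockVec, hab']⟩
  · rintro ⟨hsum, hx⟩
    have hconst (a' b' : Fin (n + 1)) (hab' : a' ∈ B ↔ b' ∈ B) : x a' = x b' := by
      rcases eq_or_ne a' b' with rfl | hne
      · rfl
      · exact (mem_Hyp_swap_iff.mp (hx _ ⟨a', b', hne, hab', rfl⟩)).2
    have hx' (m : Fin (n + 1)) : x m = if m ∈ B then x a else x b := by
      split_ifs with hm
      · exact hconst m a (iff_of_true hm ha)
      · exact hconst m b (iff_of_false hm hb)
    rw [Finset.sum_congr rfl fun m _ => hx' m, sum_ite_mem_univ] at hsum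
    refine ⟨x a / Bᶜ.card, funext fun m => ?_⟩
    rw [hx' m]
    simp only [Pi.smul_apply, smul_eq_mul, blockVec]
    split_ifs
    · field_simp
    · field_simp
      linear_combination -hsum

theorem blockVec_mem_Vt (ha : a ∈ B) (hb : b ∉ B) :
    blockVec (k := k) B ∈ Vt k n (Equiv.swap a b) := by
  refine Set.mem_biUnion (x := Set.range fun c : k => c • blockVec B)
    ⟨isWeylLine_blockVec ha hb, fun h => blockVec_apply_ne (k := k) ha hb ?_⟩ ⟨1, one_smul k _⟩
  exact (mem_Hyp_swap_iff.mp (h ⟨1, one_smul k _⟩)).2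

end BlockLine

section CoordinateRing

variable {k n}

noncomputable abbrev mkO (X : Set (Fin (n + 1) → k)) : MvPolynomial (Fin (n + 1)) k →+* O k n X :=
  Ideal.Quotient.mk _

theorem mkO_surjective (X : Set (Fin (n + 1) → k)) : Function.Surjective (mkO X) :=
  Ideal.Quotient.mk_surjective

theorem mkO_eq_zero_iff {X : Set (Fin (n + 1) → k)} {p : MvPolynomial (Fin (n + 1)) k} :
    mkO X p = 0 ↔ ∀ x ∈ X, MvPolynomial.eval x p = 0 :=
  Ideal.Quotient.eq_zero_iff_mem.trans MvPolynomial.mem_vanishingIdeal_iff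

theorem res_mkO {X Y : Set (Fin (n + 1) → k)} (h : X ⊆ Y) (p : MvPolynomial (Fin (n + 1)) k) :
    res k n h (mkO Y p) = mkO X p :=
  Ideal.Quotient.factor_mk _ p

theorem permO_mkO {σ : Equiv.Perm (Fin (n + 1))} {X : Set (Fin (n + 1) → k)}
    (hX : ∀ x ∈ X, x ∘ σ ∈ X) (p : MvPolynomial (Fin (n + 1)) k) :
    permO k n σ X (mkO X p) = mkO X (MvPolynomial.rename σ p) :=
  (congrArg (fun φ : O k n X →+* O k n X => φ (mkO X p)) (dite_cond_eq_true (eq_true hX))).trans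
    (Ideal.Quotient.lift_mk _ _ _)

theorem permO_res {σ : Equiv.Perm (Fin (n + 1))} {X Y : Set (Fin (n + 1) → k)} (h : X ⊆ Y)
    (hX : ∀ x ∈ X, x ∘ σ ∈ X) (hY : ∀ y ∈ Y, y ∘ σ ∈ Y) (f : O k n Y) :
    permO k n σ X (res k n h f) = res k n h (permO k n σ Y f) := by
  obtain ⟨p, rfl⟩ := mkO_surjective Y f
  rw [res_mkO, permO_mkO hX, permO_mkO hY, res_mkO]

theorem isUnit_two_O (X : Set (Fin (n + 1) → k)) : IsUnit (2 : O k n X) := by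
  have h2 : IsUnit (2 : MvPolynomial (Fin (n + 1)) k) := by
    rw [← map_ofNat MvPolynomial.C 2]
    exact (IsUnit.mk0 2 two_ne_zero).map _
  rw [← map_ofNat (mkO X) 2]
  exact h2.map _

/-- `X_a - X_b` vanishes on `X` only at the origin, and a polynomial vanishing on a punctured
line through the origin also vanishes at the origin. -/
theorem mkO_X_sub_X_mem_nonZeroDivisors {a b : Fin (n + 1)} {X : Set (Fin (n + 1) → k)}
    (hX : X ⊆ Vt k n (Equiv.swap a b)) (hcone : ∀ x ∈ X, ∀ c : k, c • x ∈ X)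
    (hne : ∃ v ∈ X, v ≠ 0) :
    mkO X (MvPolynomial.X a - MvPolynomial.X b) ∈ nonZeroDivisors (O k n X) := by
  refine mem_nonZeroDivisors_iff_right.mpr fun f hf => ?_
  obtain ⟨q, rfl⟩ := mkO_surjective X f
  rw [← map_mul, mkO_eq_zero_iff] at hf
  have hq (x : Fin (n + 1) → k) (hx : x ∈ X) (hx0 : x ≠ 0) : MvPolynomial.eval x q = 0 := by
    have hx' := hf x hx
    simp only [map_mul, map_sub, MvPolynomial.eval_X] at hx'
    exact (mul_eq_zero.mp hx').resolve_right
      (sub_ne_zero.mpr (apply_ne_of_mem_Vt_swap (hX hx) hx0))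
  refine mkO_eq_zero_iff.mpr fun x hx => ?_
  rcases eq_or_ne x 0 with rfl | hx0
  · obtain ⟨v, hv, hv0⟩ := hne
    exact eval_zero_of_forall_eval_smul_eq_zero v q fun c hc =>
      hq _ (hcone v hv c) (smul_ne_zero hc hv0)
  · exact hq x hx hx0

end CoordinateRing

section SimpleTranspositions

open Fin.NatCast

variable {k n}

theorem natCast_ne_natCast {a b : ℕ} (ha : a < n + 1) (hb : b < n + 1) (hab : a ≠ b) :
    (a : Fin (n + 1)) ≠ b := by
  simpa [Fin.ext_iff, Nat.mod_eq_of_lt ha, Nat.mod_eq_of_lt hb] using hab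

theorem simple_commute {i j : ℕ} (hi : i < n) (hj : j < n) (hdist : i + 1 < j ∨ j + 1 < i) :
    Commute (simple n j) (simple n i) :=
  (Equiv.Perm.disjoint_swap_swap (by
    simp only [List.nodup_cons, List.mem_cons, List.not_mem_nil, or_false, List.nodup_nil,
      and_true, not_or, not_false_eq_true]
    refine ⟨⟨?_, ?_, ?_⟩, ⟨?_, ?_⟩, ?_⟩ <;>
      exact natCast_ne_natCast (by omega) (by omega) (by omega))).commute

theorem comp_simple_mem_Vi {j : ℕ} {x : Fin (n + 1) → k} (hx : x ∈ Vi k n j) :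
    x ∘ simple n j ∈ Vi k n j :=
  comp_mem_Vt (Commute.refl _) hx

theorem mkO_mem_fixedO {j : ℕ} {P : MvPolynomial (Fin (n + 1)) k}
    (hP : MvPolynomial.rename (simple n j) P = P) : mkO (Vi k n j) P ∈ fixedO k n j := by
  change permO k n (simple n j) (Vi k n j) (mkO _ P) = mkO _ P
  rw [permO_mkO (fun _ => comp_simple_mem_Vi), hP]

theorem exists_eq_add_mul_fbar {j : ℕ} (hj : j < n) (f : O k n (Vi k n j)) :
    ∃ a b : fixedO k n j, f = a + b * fbar k n (Vi k n j) j := by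
  obtain ⟨p, rfl⟩ := mkO_surjective _ f
  obtain ⟨P, Q, hP, hQ, rfl⟩ := exists_rename_swap_eq_add_X_sub_X_mul
    (natCast_ne_natCast (n := n) (by omega) (by omega) (Nat.ne_add_one j)) p
  refine ⟨⟨_, mkO_mem_fixedO hP⟩, ⟨_, mkO_mem_fixedO hQ⟩, ?_⟩
  rw [map_add, map_mul, mul_comm]
  rfl

theorem permO_simple_fbar {j : ℕ} {X : Set (Fin (n + 1) → k)}
    (hX : ∀ x ∈ X, x ∘ simple n j ∈ X) :
    permO k n (simple n j) X (fbar k n X j) = -fbar k n X j := by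
  change permO k n (simple n j) X (mkO X _) = -mkO X _
  rw [permO_mkO hX, ← map_neg]
  simp [simple]

theorem exists_ne_zero_mem_Vi_inter_Vi {i j : ℕ} (hi : i < n) (hj : j < n)
    (hdist : i + 1 < j ∨ j + 1 < i) : ∃ v ∈ Vi k n i ∩ Vi k n j, v ≠ 0 := by
  set B : Finset (Fin (n + 1)) := {(i : Fin (n + 1)), (j : Fin (n + 1))}
  have hnotMem {a : ℕ} (ha : a < n + 1) (hai : a ≠ i) (haj : a ≠ j) : (a : Fin (n + 1)) ∉ B := by
    simp [B, natCast_ne_natCast ha (by omega : i < n + 1) hai,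
      natCast_ne_natCast ha (by omega : j < n + 1) haj]
  have hiB : (i : Fin (n + 1)) ∈ B := by simp [B]
  have hi1B := hnotMem (a := i + 1) (by omega) (by omega) (by omega)
  refine ⟨blockVec B, ⟨blockVec_mem_Vt hiB hi1B, blockVec_mem_Vt (by simp [B])
    (hnotMem (a := j + 1) (by omega) (by omega) (by omega))⟩, fun h => ?_⟩
  exact blockVec_apply_ne (k := k) hiB hi1B (by simp [h])

end SimpleTranspositions

/-- (0-indexed.)  Let `|i − j| > 1` and
`M := O(V_i ∩ V_j) ⊗_{O(V_j)^{s_j}} O(V_j)`.  Every `f ∈ O(V_j)` restricting to zero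
on `V_i ∩ V_j` acts as zero on `M` (acting through the second factor); hence the right
`O(V_j)`-action factors through `O(V_j) → O(V_i ∩ V_j)`, and `M` is free as a right
`O(V_i ∩ V_j)`-module. -/
theorem right_action_factors_and_free_distant (i j : ℕ) (hi : i < n) (hj : j < n)
    (hdist : i + 1 < j ∨ j + 1 < i) :
    letI N := O k n (Vi k n i ∩ Vi k n j)
    letI : Algebra (fixedO k n j) N :=
      ((res k n (Set.inter_subset_right : Vi k n i ∩ Vi k n j ⊆ Vi k n j)).comp
        (fixedO k n j).subtype).toAlgebra
    letI M := N ⊗[fixedO k n j] O k n (Vi k n j)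
    letI incR : O k n (Vi k n j) →+* M := Algebra.TensorProduct.includeRight.toRingHom
    (∀ f : O k n (Vi k n j),
      res k n (Set.inter_subset_right : Vi k n i ∩ Vi k n j ⊆ Vi k n j) f = 0 →
      ∀ x : M, incR f * x = 0) ∧
    (∃ g : N →+* M,
      g.comp (res k n (Set.inter_subset_right : Vi k n i ∩ Vi k n j ⊆ Vi k n j)) = incR ∧
      FreeVia g) := by
  set W := Vi k n i ∩ Vi k n j
  have hWj : W ⊆ Vi k n j := Set.inter_subset_right
  let _ : Algebra (fixedO k n j) (O k n W) := ((res k n hWj).comp (fixedO k n j).subtype).toAlgebra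
  have hW : ∀ x ∈ W, x ∘ simple n j ∈ W := fun x hx =>
    ⟨comp_mem_Vt (simple_commute hi hj hdist) hx.1, comp_simple_mem_Vi hx.2⟩
  let ρ : O k n (Vi k n j) →ₐ[fixedO k n j] O k n W :=
    { res k n hWj with commutes' := fun _ => rfl }
  let τ : O k n W →ₐ[fixedO k n j] O k n W :=
    { permO k n (simple n j) W with
      commutes' := fun a => (permO_res hWj hW (fun _ => comp_simple_mem_Vi) a).trans
        (congrArg (res k n hWj) a.2) }
  have hτ : τ (ρ (fbar k n _ j)) = -ρ (fbar k n _ j) := permO_simple_fbar hW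
  have hd : ρ (fbar k n _ j) ∈ nonZeroDivisors (O k n W) :=
    mkO_X_sub_X_mem_nonZeroDivisors (fun x hx => hx.2)
      (fun x hx c => ⟨smul_mem_Vt hx.1 c, smul_mem_Vt hx.2 c⟩)
      (exists_ne_zero_mem_Vi_inter_Vi hi hj hdist)
  have hρ : Function.Surjective ρ := Ideal.Quotient.factor_surjective (vanishingIdeal_anti k n hWj)
  have hspan := exists_eq_add_mul_fbar (k := k) hj
  obtain ⟨g, hg, hfree⟩ :=
    exists_lift_includeRight_freeVia ρ τ hρ hτ (isUnit_two_O W) hd hspan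
  refine ⟨fun f hf x => ?_, g, hg, hfree⟩
  change (1 : O k n W) ⊗ₜ[fixedO k n j] f * x = 0
  rw [one_tmul_eq_zero_of_map_eq_zero ρ τ hτ (isUnit_two_O W) hd hspan hf, zero_mul]

end TLpaper
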